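/- There exists an absolute constant c > 0 such that the following holds: for all integers u ≥ 2, t ≥ 2 and b ≥ 2, every finite set X of positive integers contained in {1,…,u} admits a weighted (t, Δ)-halver with Δ = c·(t/√b + b·u)·(log(2·t·u))^c. -/
import Mathlib

set_option maxHeartbeats 1000000


/-- `SUM S` is the sum of the elements of the finite set `S`. -/
def SUM (S : Finset ℕ) : ℕ := S.sum id

/-- `(X', X'')` is a weighted `(t, Δ)`-halver of `X`. -/
def IsWeightedHalver (X X' X'' : Finset ℕ) (t Δ : ℝ) : Prop :=
  X' ∪ X'' = X ∧ Disjoint X' X'' ∧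
  ∀ S ⊆ X, (SUM S : ℝ) ≤ t →
    ∃ Shat ⊆ X, SUM Shat = SUM S ∧
      ((SUM (Shat ∩ X') : ℝ) ≤ (SUM Shat : ℝ) / 2 + Δ) ∧
      ((SUM (Shat ∩ X'') : ℝ) ≤ (SUM Shat : ℝ) / 2 + Δ)

/-- A canonical representative subset of `X` of sum `m`, if one exists. -/
noncomputable def rep (X : Finset ℕ) (m : ℕ) : Finset ℕ :=
  if h : ∃ S, S ⊆ X ∧ SUM S = m then h.choose else ∅

lemma rep_subset (X : Finset ℕ) (m : ℕ) : rep X m ⊆ X := by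
  unfold rep
  split
  · next h => exact h.choose_spec.1
  · exact Finset.empty_subset _

lemma rep_sum_le (X : Finset ℕ) (m : ℕ) : SUM (rep X m) ≤ m := by
  unfold rep
  split
  · next h => exact le_of_eq h.choose_spec.2
  · simp [SUM]

lemma rep_sum_eq (X : Finset ℕ) (m : ℕ) (h : ∃ S, S ⊆ X ∧ SUM S = m) :
    SUM (rep X m) = m := by
  unfold rep
  split
  · next h' => exact h'.choose_spec.2
  · next h' => exact absurd h h'

lemma inter_sdiff_eq_sdiff (S X P : Finset ℕ) (h : S ⊆ X) : S ∩ (X \ P) = S \ P := by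
  ext x
  simp only [Finset.mem_inter, Finset.mem_sdiff]
  exact ⟨fun ⟨hs, _, hp⟩ => ⟨hs, hp⟩, fun ⟨hs, hp⟩ => ⟨hs, h hs, hp⟩⟩

lemma SUM_cast (S : Finset ℕ) : (SUM S : ℝ) = ∑ x ∈ S, (x : ℝ) := by
  unfold SUM
  rw [Nat.cast_sum]
  rfl

/-- The signed discrepancy of `S` with respect to the partition `(P, Pᶜ)`. -/
noncomputable def Df (P S : Finset ℕ) : ℝ :=
  (∑ x ∈ S ∩ P, (x : ℝ)) - ∑ x ∈ S \ P, (x : ℝ)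

/-- Counting (one-sided Hoeffding-type) bound: the number of subsets `P ⊆ X` for which the
signed sum `∑_{x ∈ S ∩ P} a x - ∑_{x ∈ S \ P} a x` exceeds `Λ` is exponentially small. -/
lemma count_tail (X S : Finset ℕ) (hSX : S ⊆ X) (a : ℕ → ℝ) (h Λ : ℝ) (hh : 0 < h) :
    ((X.powerset.filter fun P =>
        Λ < (∑ x ∈ S ∩ P, a x) - ∑ x ∈ S \ P, a x).card : ℝ)
      ≤ 2 ^ X.card * Real.exp (h ^ 2 * (∑ x ∈ S, a x ^ 2) / 2 - h * Λ) := by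
  classical
  set D : Finset ℕ → ℝ := fun P => (∑ x ∈ S ∩ P, a x) - ∑ x ∈ S \ P, a x with hD
  set f : ℕ → ℝ := fun x => if x ∈ S then Real.exp (h * a x) else 1 with hf
  set g : ℕ → ℝ := fun x => if x ∈ S then Real.exp (-(h * a x)) else 1 with hg
  have step1 : ∀ P ∈ X.powerset,
      (∏ x ∈ P, f x) * (∏ x ∈ X \ P, g x) = Real.exp (h * D P) := by
    intro P hP
    rw [Finset.mem_powerset] at hP
    have h1 : (∏ x ∈ P, f x) = Real.exp (∑ x ∈ S ∩ P, h * a x) := by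
      rw [hf, Finset.prod_ite_mem P S (fun x => Real.exp (h * a x)),
        Finset.inter_comm, Real.exp_sum]
    have h2 : (∏ x ∈ X \ P, g x) = Real.exp (∑ x ∈ S \ P, -(h * a x)) := by
      rw [hg, Finset.prod_ite_mem (X \ P) S (fun x => Real.exp (-(h * a x))),
        Finset.inter_comm, inter_sdiff_eq_sdiff S X P hSX, Real.exp_sum]
    rw [h1, h2, ← Real.exp_add]
    congr 1
    rw [Finset.sum_neg_distrib, ← Finset.mul_sum, ← Finset.mul_sum, hD]
    ring
  have step2 : ∑ P ∈ X.powerset, Real.exp (h * D P)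
      = ∏ x ∈ X, (f x + g x) := by
    rw [Finset.prod_add f g X]
    exact (Finset.sum_congr rfl step1).symm
  have step3 : ∏ x ∈ X, (f x + g x)
      ≤ ∏ x ∈ X, (2 * Real.exp (h ^ 2 * (if x ∈ S then a x ^ 2 else 0) / 2)) := by
    apply Finset.prod_le_prod
    · intro x _
      simp only [hf, hg]
      split_ifs <;> positivity
    · intro x _
      by_cases hx : x ∈ S
      · simp only [hf, hg, hx, if_true]
        have hcosh : Real.exp (h * a x) + Real.exp (-(h * a x))
            = 2 * Real.cosh (h * a x) := by
          rw [Real.cosh_eq]; ring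
        rw [hcosh]
        have hc := Real.cosh_le_exp_half_sq (h * a x)
        have heq : (h * a x) ^ 2 / 2 = h ^ 2 * a x ^ 2 / 2 := by ring
        rw [heq] at hc
        linarith
      · simp only [hf, hg, hx, if_false]
        norm_num
  have step4 : ∏ x ∈ X, (2 * Real.exp (h ^ 2 * (if x ∈ S then a x ^ 2 else 0) / 2))
      = 2 ^ X.card * Real.exp (h ^ 2 * (∑ x ∈ S, a x ^ 2) / 2) := by
    rw [Finset.prod_mul_distrib, Finset.prod_const, ← Real.exp_sum]
    congr 1
    rw [← Finset.sum_div, ← Finset.mul_sum, Finset.sum_ite_mem,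
      Finset.inter_eq_right.mpr hSX]
  have step5 : ((X.powerset.filter fun P => Λ < D P).card : ℝ) * Real.exp (h * Λ)
      ≤ ∑ P ∈ X.powerset, Real.exp (h * D P) := by
    have h1 : (X.powerset.filter fun P => Λ < D P).card • Real.exp (h * Λ)
        ≤ ∑ P ∈ X.powerset.filter fun P => Λ < D P, Real.exp (h * D P) := by
      apply Finset.card_nsmul_le_sum
      intro P hP
      rw [Finset.mem_filter] at hP
      exact Real.exp_le_exp.mpr (mul_le_mul_of_nonneg_left hP.2.le hh.le)
    rw [nsmul_eq_mul] at h1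
    refine h1.trans ?_
    apply Finset.sum_le_sum_of_subset_of_nonneg (Finset.filter_subset _ _)
    intro _ _ _
    positivity
  have key : ((X.powerset.filter fun P => Λ < D P).card : ℝ) * Real.exp (h * Λ)
      ≤ 2 ^ X.card * Real.exp (h ^ 2 * (∑ x ∈ S, a x ^ 2) / 2) :=
    step5.trans (step2.trans_le (step3.trans (le_of_eq step4)))
  rw [Real.exp_sub, ← mul_div_assoc, le_div_iff₀ (Real.exp_pos _)]
  exact key

/-- Two-sided version, for the discrepancy `Df`. -/
lemma count_abs (X S : Finset ℕ) (hSX : S ⊆ X) (h Λ : ℝ) (hh : 0 < h) :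
    ((X.powerset.filter fun P => Λ < |Df P S|).card : ℝ)
      ≤ 2 * (2 ^ X.card * Real.exp (h ^ 2 * (∑ x ∈ S, (x : ℝ) ^ 2) / 2 - h * Λ)) := by
  classical
  have hpos : ((X.powerset.filter fun P => Λ < Df P S).card : ℝ)
      ≤ 2 ^ X.card * Real.exp (h ^ 2 * (∑ x ∈ S, (x : ℝ) ^ 2) / 2 - h * Λ) := by
    have h1 := count_tail X S hSX (fun x => (x : ℝ)) h Λ hh
    exact h1
  have hneg : ((X.powerset.filter fun P => Λ < -(Df P S)).card : ℝ)
      ≤ 2 ^ X.card * Real.exp (h ^ 2 * (∑ x ∈ S, (x : ℝ) ^ 2) / 2 - h * Λ) := by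
    have h2 := count_tail X S hSX (fun x => -(x : ℝ)) h Λ hh
    have hfil : (X.powerset.filter fun P => Λ < -(Df P S))
        = (X.powerset.filter fun P =>
            Λ < (∑ x ∈ S ∩ P, -(x : ℝ)) - ∑ x ∈ S \ P, -(x : ℝ)) := by
      apply Finset.filter_congr
      intro P _
      have hpred : ((∑ x ∈ S ∩ P, -(x : ℝ)) - ∑ x ∈ S \ P, -(x : ℝ)) = -(Df P S) := by
        rw [Df, Finset.sum_neg_distrib, Finset.sum_neg_distrib]
        ring
      rw [hpred]
    rw [hfil]
    have hsq : (∑ x ∈ S, (-(x : ℝ)) ^ 2) = ∑ x ∈ S, (x : ℝ) ^ 2 := by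
      simp
    rw [← hsq]
    exact h2
  have hsub : (X.powerset.filter fun P => Λ < |Df P S|)
      ⊆ (X.powerset.filter fun P => Λ < Df P S)
        ∪ (X.powerset.filter fun P => Λ < -(Df P S)) := by
    intro P hP
    rw [Finset.mem_filter] at hP
    rcases lt_abs.mp hP.2 with hc | hc
    · exact Finset.mem_union_left _ (Finset.mem_filter.mpr ⟨hP.1, hc⟩)
    · exact Finset.mem_union_right _ (Finset.mem_filter.mpr ⟨hP.1, hc⟩)
  have hcard : ((X.powerset.filter fun P => Λ < |Df P S|).card : ℝ)
      ≤ ((X.powerset.filter fun P => Λ < Df P S).card : ℝ)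
        + ((X.powerset.filter fun P => Λ < -(Df P S)).card : ℝ) := by
    have := (Finset.card_le_card hsub).trans (Finset.card_union_le _ _)
    exact_mod_cast this
  linarith

lemma amgm_sqrt (x y : ℝ) (hx : 0 ≤ x) (hy : 0 ≤ y) :
    2 * Real.sqrt (x * y) ≤ x + y := by
  have h1 : Real.sqrt (x * y) = Real.sqrt x * Real.sqrt y := Real.sqrt_mul hx y
  nlinarith [Real.sq_sqrt hx, Real.sq_sqrt hy, Real.sqrt_nonneg x, Real.sqrt_nonneg y,
    sq_nonneg (Real.sqrt x - Real.sqrt y)]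

theorem stmt_17 :
    ∃ c : ℝ, 0 < c ∧
      ∀ u t b : ℕ, 2 ≤ u → 2 ≤ t → 2 ≤ b →
        ∀ X : Finset ℕ, (∀ x ∈ X, x ∈ Finset.Icc 1 u) →
          ∃ X' X'' : Finset ℕ,
            IsWeightedHalver X X' X'' (t : ℝ)
              (c * ((t : ℝ) / Real.sqrt (b : ℝ) + (b : ℝ) * (u : ℝ)) *
                (Real.log (2 * (t : ℝ) * (u : ℝ))) ^ c) := by
  refine ⟨1, one_pos, ?_⟩
  intro u t b hu ht hb X hX
  obtain ⟨U, hUdef⟩ : ∃ x : ℝ, x = (u : ℝ) := ⟨_, rfl⟩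
  obtain ⟨T, hTdef⟩ : ∃ x : ℝ, x = (t : ℝ) := ⟨_, rfl⟩
  obtain ⟨B, hBdef⟩ : ∃ x : ℝ, x = (b : ℝ) := ⟨_, rfl⟩
  rw [← hUdef, ← hTdef, ← hBdef]
  have hU2 : (2:ℝ) ≤ U := by rw [hUdef]; exact_mod_cast hu
  have hT2 : (2:ℝ) ≤ T := by rw [hTdef]; exact_mod_cast ht
  have hB2 : (2:ℝ) ≤ B := by rw [hBdef]; exact_mod_cast hb
  have hUT : (0:ℝ) < U * T := by nlinarith
  obtain ⟨L, hLdef⟩ : ∃ x : ℝ, x = Real.log (2 * T * U) := ⟨_, rfl⟩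
  rw [← hLdef]
  obtain ⟨Δ, hΔdef⟩ : ∃ x : ℝ, x = 1 * (T / Real.sqrt B + B * U) * L ^ (1:ℝ) := ⟨_, rfl⟩
  rw [← hΔdef]
  have hL1 : 1 ≤ L := by
    rw [hLdef, Real.le_log_iff_exp_le (by nlinarith)]
    have := Real.exp_one_lt_d9
    nlinarith
  have hlogarg : (0:ℝ) < Real.log (4 * (T + 1)) := by
    apply Real.log_pos; nlinarith
  have hlog2L : Real.log (4 * (T + 1)) ≤ 2 * L := by
    have h1 : (4 * (T + 1)) ≤ (2 * T * U) ^ 2 := by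
      have h4 : (4:ℝ) ≤ T * U := by nlinarith
      have h2T : 2 * T ≤ T * U := by nlinarith
      nlinarith [h4, h2T, hT2]
    have h2 := Real.log_le_log (by nlinarith) h1
    rw [Real.log_pow] at h2
    rw [hLdef]
    calc Real.log (4 * (T + 1)) ≤ ((2:ℕ):ℝ) * Real.log (2 * T * U) := h2
      _ = 2 * Real.log (2 * T * U) := by norm_num
  obtain ⟨Λ, hΛdef⟩ : ∃ x : ℝ, x = Real.sqrt (2 * U * T * Real.log (4 * (T + 1))) := ⟨_, rfl⟩
  have hargpos : (0:ℝ) < 2 * U * T * Real.log (4 * (T + 1)) := by nlinarith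
  have hΛpos : 0 < Λ := hΛdef ▸ Real.sqrt_pos.mpr hargpos
  have hΛsq : Λ ^ 2 = 2 * U * T * Real.log (4 * (T + 1)) := hΛdef ▸ Real.sq_sqrt hargpos.le
  obtain ⟨h, hhdef⟩ : ∃ x : ℝ, x = Λ / (U * T) := ⟨_, rfl⟩
  have hh : 0 < h := hhdef ▸ div_pos hΛpos hUT
  have hkey : h * (U * T) = Λ := by
    rw [hhdef]; field_simp
  have hsqid : h ^ 2 * (U * T) = 2 * Real.log (4 * (T + 1)) := by
    have h1 : (h * (U * T)) ^ 2 = 2 * U * T * Real.log (4 * (T + 1)) := by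
      rw [hkey]; exact hΛsq
    have h2 : h ^ 2 * (U * T) * (U * T) = (2 * Real.log (4 * (T + 1))) * (U * T) := by
      nlinarith [h1]
    exact mul_right_cancel₀ hUT.ne' h2
  have hhΛ : h * Λ = 2 * Real.log (4 * (T + 1)) := by
    rw [← hkey]
    linear_combination hsqid
  -- Λ ≤ 2 Δ
  have hΔeq : Δ = (T / Real.sqrt B + B * U) * L := by
    rw [hΔdef, Real.rpow_one, one_mul]
  have hsB1 : 1 ≤ Real.sqrt B := by
    rw [show (1:ℝ) = Real.sqrt 1 by simp]
    exact Real.sqrt_le_sqrt (by linarith)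
  have hsBpos : (0:ℝ) < Real.sqrt B := by linarith
  have hBs : Real.sqrt B * Real.sqrt B = B := Real.mul_self_sqrt (by linarith)
  have hprod : (T / Real.sqrt B) * (B * U) = T * U * Real.sqrt B := by
    field_simp
    nlinarith [hBs]
  have hW : 2 * Real.sqrt (T * U) ≤ T / Real.sqrt B + B * U := by
    have h0 : 2 * Real.sqrt ((T / Real.sqrt B) * (B * U)) ≤ T / Real.sqrt B + B * U :=
      amgm_sqrt _ _ (by positivity) (by nlinarith)
    have h1 : Real.sqrt (T * U) ≤ Real.sqrt ((T / Real.sqrt B) * (B * U)) := by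
      apply Real.sqrt_le_sqrt
      rw [hprod]
      nlinarith
    linarith
  have hΔnn : 0 ≤ Δ := by
    rw [hΔeq]
    have h1 : 0 ≤ Real.sqrt (T * U) := Real.sqrt_nonneg _
    nlinarith
  have hΛ2Δ : Λ ≤ 2 * Δ := by
    have h1 : Λ ≤ Real.sqrt (4 * (U * T * L)) := by
      rw [hΛdef]
      apply Real.sqrt_le_sqrt
      nlinarith
    have h2 : Real.sqrt (4 * (U * T * L)) ≤ 2 * Δ := by
      have h3 : U * T * L ≤ Δ ^ 2 := by
        rw [hΔeq]
        have hs := Real.sq_sqrt (show (0:ℝ) ≤ T * U by nlinarith)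
        have hsn := Real.sqrt_nonneg (T * U)
        have hW2 : 4 * (T * U) ≤ (T / Real.sqrt B + B * U) ^ 2 := by
          nlinarith [hW, hs, hsn]
        have hL4 : L ≤ 4 * (L * L) := by nlinarith [hL1]
        have e1 : U * T * L ≤ (U * T) * (4 * (L * L)) :=
          mul_le_mul_of_nonneg_left hL4 hUT.le
        have e2 : (4 * (T * U)) * (L * L) ≤ ((T / Real.sqrt B + B * U) ^ 2) * (L * L) :=
          mul_le_mul_of_nonneg_right hW2 (by positivity)
        nlinarith [e1, e2]
      calc Real.sqrt (4 * (U * T * L)) ≤ Real.sqrt (4 * Δ ^ 2) :=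
            Real.sqrt_le_sqrt (by linarith [h3])
        _ = 2 * Δ := by
            rw [show (4:ℝ) * Δ ^ 2 = (2 * Δ) ^ 2 by ring]
            exact Real.sqrt_sq (by linarith)
    linarith
  -- per-m bound on Q
  have hQ : ∀ m : ℕ, m ∈ Finset.range (t + 1) →
      (∑ x ∈ rep X m, (x : ℝ) ^ 2) ≤ U * T := by
    intro m hm
    rw [Finset.mem_range] at hm
    have hnat : (∑ x ∈ rep X m, x ^ 2) ≤ u * t := by
      calc (∑ x ∈ rep X m, x ^ 2) ≤ ∑ x ∈ rep X m, u * x := by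
            apply Finset.sum_le_sum
            intro x hx
            have hxu := hX x (rep_subset X m hx)
            rw [Finset.mem_Icc] at hxu
            calc x ^ 2 = x * x := sq x
              _ ≤ u * x := Nat.mul_le_mul_right x hxu.2
        _ = u * ∑ x ∈ rep X m, x := by rw [Finset.mul_sum]
        _ = u * SUM (rep X m) := rfl
        _ ≤ u * m := Nat.mul_le_mul_left u (rep_sum_le X m)
        _ ≤ u * t := Nat.mul_le_mul_left u (by omega)
    calc (∑ x ∈ rep X m, (x : ℝ) ^ 2) = ((∑ x ∈ rep X m, x ^ 2 : ℕ) : ℝ) := by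
          push_cast; ring
      _ ≤ ((u * t : ℕ) : ℝ) := by exact_mod_cast hnat
      _ = U * T := by rw [hUdef, hTdef]; push_cast; ring
  -- the union bound over all candidate sums
  have hexpbd : Real.exp (-(Real.log (4 * (T + 1)))) = (4 * (T + 1))⁻¹ := by
    rw [Real.exp_neg, Real.exp_log (by linarith)]
  have hperm : ∀ m ∈ Finset.range (t + 1),
      ((X.powerset.filter fun P => Λ < |Df P (rep X m)|).card : ℝ)
        ≤ 2 ^ X.card * (2 * (4 * (T + 1))⁻¹) := by
    intro m hm
    have h1 := count_abs X (rep X m) (rep_subset X m) h Λ hh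
    have h2 : h ^ 2 * (∑ x ∈ rep X m, (x : ℝ) ^ 2) / 2 - h * Λ
        ≤ -(Real.log (4 * (T + 1))) := by
      have hq := hQ m hm
      have hmul : h ^ 2 * (∑ x ∈ rep X m, (x : ℝ) ^ 2) ≤ h ^ 2 * (U * T) :=
        mul_le_mul_of_nonneg_left hq (sq_nonneg h)
      linarith [hsqid, hhΛ, hmul]
    have h3 : Real.exp (h ^ 2 * (∑ x ∈ rep X m, (x : ℝ) ^ 2) / 2 - h * Λ)
        ≤ (4 * (T + 1))⁻¹ := by
      rw [← hexpbd]
      exact Real.exp_le_exp.mpr h2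
    have h4 : (0:ℝ) ≤ 2 ^ X.card := by positivity
    calc ((X.powerset.filter fun P => Λ < |Df P (rep X m)|).card : ℝ)
        ≤ 2 * (2 ^ X.card * Real.exp (h ^ 2 * (∑ x ∈ rep X m, (x : ℝ) ^ 2) / 2 - h * Λ)) :=
          h1
      _ ≤ 2 * (2 ^ X.card * (4 * (T + 1))⁻¹) := by
            have h5 := mul_le_mul_of_nonneg_left h3 h4
            linarith [h5]
      _ = 2 ^ X.card * (2 * (4 * (T + 1))⁻¹) := by ring
  have hBadcard : (((Finset.range (t + 1)).biUnion
      (fun m => X.powerset.filter fun P => Λ < |Df P (rep X m)|)).card : ℝ)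
        < 2 ^ X.card := by
    have hnat : ((Finset.range (t + 1)).biUnion
        (fun m => X.powerset.filter fun P => Λ < |Df P (rep X m)|)).card
          ≤ ∑ m ∈ Finset.range (t + 1),
            (X.powerset.filter fun P => Λ < |Df P (rep X m)|).card :=
      Finset.card_biUnion_le
    have hcast : (((Finset.range (t + 1)).biUnion
        (fun m => X.powerset.filter fun P => Λ < |Df P (rep X m)|)).card : ℝ)
          ≤ ∑ m ∈ Finset.range (t + 1),
            ((X.powerset.filter fun P => Λ < |Df P (rep X m)|).card : ℝ) := by
      exact_mod_cast hnat
    have hsum2 : ∑ m ∈ Finset.range (t + 1),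
        ((X.powerset.filter fun P => Λ < |Df P (rep X m)|).card : ℝ)
          ≤ ((t + 1 : ℕ) : ℝ) * (2 ^ X.card * (2 * (4 * (T + 1))⁻¹)) := by
      calc ∑ m ∈ Finset.range (t + 1),
          ((X.powerset.filter fun P => Λ < |Df P (rep X m)|).card : ℝ)
          ≤ ∑ _m ∈ Finset.range (t + 1), (2 ^ X.card * (2 * (4 * (T + 1))⁻¹) : ℝ) :=
            Finset.sum_le_sum hperm
        _ = ((t + 1 : ℕ) : ℝ) * (2 ^ X.card * (2 * (4 * (T + 1))⁻¹)) := by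
            rw [Finset.sum_const, Finset.card_range, nsmul_eq_mul]
    have hTcast : ((t + 1 : ℕ) : ℝ) = T + 1 := by rw [hTdef]; push_cast; ring
    have hfin : ((t + 1 : ℕ) : ℝ) * (2 ^ X.card * (2 * (4 * (T + 1))⁻¹))
        = 2 ^ X.card / 2 := by
      rw [hTcast]
      have hne : (T + 1) ≠ 0 := ne_of_gt (by linarith)
      field_simp
      ring
    have h2pos : (0:ℝ) < 2 ^ X.card := by positivity
    calc (((Finset.range (t + 1)).biUnion
        (fun m => X.powerset.filter fun P => Λ < |Df P (rep X m)|)).card : ℝ)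
        ≤ 2 ^ X.card / 2 := by rw [← hfin]; exact hcast.trans hsum2
      _ < 2 ^ X.card := by linarith
  -- pick a good partition
  have hltnat : ((Finset.range (t + 1)).biUnion
      (fun m => X.powerset.filter fun P => Λ < |Df P (rep X m)|)).card
        < X.powerset.card := by
    rw [Finset.card_powerset]
    have hc2 : ((2 ^ X.card : ℕ) : ℝ) = (2 : ℝ) ^ X.card := by push_cast; ring
    have hbc := hBadcard
    rw [← hc2] at hbc
    exact_mod_cast hbc
  have hex : ∃ P ∈ X.powerset, P ∉ (Finset.range (t + 1)).biUnion
      (fun m => X.powerset.filter fun P => Λ < |Df P (rep X m)|) := by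
    by_contra hc
    push_neg at hc
    exact absurd (Finset.card_le_card hc) (not_le.mpr hltnat)
  obtain ⟨P, hPmem, hPBad⟩ := hex
  have hPX : P ⊆ X := Finset.mem_powerset.mp hPmem
  have hgood : ∀ m ∈ Finset.range (t + 1), |Df P (rep X m)| ≤ Λ := by
    intro m hm
    by_contra hc
    exact hPBad (Finset.mem_biUnion.mpr
      ⟨m, hm, Finset.mem_filter.mpr ⟨hPmem, not_le.mp hc⟩⟩)
  refine ⟨P, X \ P, Finset.union_sdiff_of_subset hPX, Finset.disjoint_sdiff, ?_⟩
  intro S hSX hsum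
  obtain ⟨m, hmdef⟩ : ∃ m : ℕ, m = SUM S := ⟨_, rfl⟩
  have hmt : m ≤ t := by
    rw [hTdef] at hsum
    rw [hmdef]
    exact_mod_cast hsum
  obtain ⟨Shat, hShatdef⟩ : ∃ Z : Finset ℕ, Z = rep X m := ⟨_, rfl⟩
  have hShatX : Shat ⊆ X := hShatdef ▸ rep_subset X m
  have hShatsum : SUM Shat = SUM S := by
    rw [hShatdef, hmdef]
    exact rep_sum_eq X (SUM S) ⟨S, hSX, rfl⟩
  have habs : |Df P Shat| ≤ Λ := by
    rw [hShatdef]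
    exact hgood m (Finset.mem_range.mpr (by omega))
  have hD : Df P Shat = (SUM (Shat ∩ P) : ℝ) - (SUM (Shat \ P) : ℝ) := by
    rw [Df, SUM_cast, SUM_cast]
  have hsplit : (SUM (Shat ∩ P) : ℝ) + (SUM (Shat \ P) : ℝ) = (SUM Shat : ℝ) := by
    have hid := Finset.sum_inter_add_sum_sdiff Shat P (id : ℕ → ℕ)
    have hcast : SUM (Shat ∩ P) + SUM (Shat \ P) = SUM Shat := hid
    exact_mod_cast hcast
  rw [hD] at habs
  obtain ⟨hab1, hab2⟩ := abs_le.mp habs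
  refine ⟨Shat, hShatX, hShatsum, ?_, ?_⟩
  · linarith
  · rw [inter_sdiff_eq_sdiff Shat X P hShatX]
    linarith
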